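/- arXiv:1907.05694 — 2 statements merged into one kernel-verified Lean document; each statement's English description precedes it below -/
import Mathlib

section
/- For the underwater vehicle vector fields f₁(x) = (cos x₅ cos x₆, cos x₅ sin x₆, −sin x₅, 0, 0, 0)ᵀ, f₂ = e₄, f₃(x) = (0,0,0, sin x₄ tan x₅, cos x₄, sin x₄ sec x₅)ᵀ, f₄(x) = (0,0,0, cos x₄ tan x₅, −sin x₄, cos x₄ sec x₅)ᵀ on D = {x ∈ R^6 : −π/2 < x₅ < π/2}, the 6×6 matrix with columns f₁, f₂, f₃, f₄, [f₁,f₃], [f₁,f₄] is nonsingular at every x ∈ D. -/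
open Real ContinuousLinearMap
set_option maxHeartbeats 1000000

noncomputable def pr6 (i : Fin 6) : (Fin 6 → ℝ) →L[ℝ] ℝ := ContinuousLinearMap.proj i

@[simp] lemma pr6_apply (i : Fin 6) (v : Fin 6 → ℝ) : pr6 i v = v i := rfl

lemma comp_proj6 {F : ℝ → ℝ} {F' : ℝ} (i : Fin 6) (x : Fin 6 → ℝ)
    (h : HasDerivAt F F' (x i)) :
    HasFDerivAt (fun x : Fin 6 → ℝ => F (x i)) (F' • pr6 i) x :=
  h.comp_hasFDerivAt x (hasFDerivAt_apply i x)


def σ6 : Equiv.Perm (Fin 6) :=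
  ⟨![0,4,5,1,2,3], ![0,3,4,5,1,2], by decide, by decide⟩

lemma sign_σ6 : Equiv.Perm.sign σ6 = 1 := by decide

lemma det_blocks6 (a b c d e f g h i p q r s t u v w y : ℝ) :
    (!![a, 0, 0, 0, b, c;
        d, 0, 0, 0, e, f;
        g, 0, 0, 0, h, i;
        0, p, q, r, 0, 0;
        0, s, t, u, 0, 0;
        0, v, w, y, 0, 0] : Matrix (Fin 6) (Fin 6) ℝ).det =
      (!![a,b,c;d,e,f;g,h,i] : Matrix (Fin 3) (Fin 3) ℝ).det *
      (!![p,q,r;s,t,u;v,w,y] : Matrix (Fin 3) (Fin 3) ℝ).det := by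
  set A : Matrix (Fin 3) (Fin 3) ℝ := !![a,b,c;d,e,f;g,h,i] with hA
  set D : Matrix (Fin 3) (Fin 3) ℝ := !![p,q,r;s,t,u;v,w,y] with hD
  set M : Matrix (Fin 6) (Fin 6) ℝ :=
    !![a, 0, 0, 0, b, c;
       d, 0, 0, 0, e, f;
       g, 0, 0, 0, h, i;
       0, p, q, r, 0, 0;
       0, s, t, u, 0, 0;
       0, v, w, y, 0, 0] with hM
  have e0 : finSumFinEquiv.symm (0 : Fin (3+3)) = Sum.inl 0 := by decide
  have e1 : finSumFinEquiv.symm (1 : Fin (3+3)) = Sum.inl 1 := by decide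
  have e2 : finSumFinEquiv.symm (2 : Fin (3+3)) = Sum.inl 2 := by decide
  have e3 : finSumFinEquiv.symm (3 : Fin (3+3)) = Sum.inr 0 := by decide
  have e4 : finSumFinEquiv.symm (4 : Fin (3+3)) = Sum.inr 1 := by decide
  have e5 : finSumFinEquiv.symm (5 : Fin (3+3)) = Sum.inr 2 := by decide
  have hperm : M.submatrix id σ6 =
      (Matrix.fromBlocks A 0 0 D).submatrix finSumFinEquiv.symm finSumFinEquiv.symm := by
    ext i j
    fin_cases i <;> fin_cases j <;>
      simp [Matrix.submatrix_apply, σ6, hA, hD, e0, e1, e2, e3, e4, e5,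
        Matrix.cons_val_succ, Matrix.fromBlocks] <;> rfl
  have h2 : (M.submatrix id σ6).det = A.det * D.det := by
    rw [hperm, Matrix.det_submatrix_equiv_self, Matrix.det_fromBlocks_zero₂₁]
  have h1 : (M.submatrix id σ6).det = M.det := by
    rw [Matrix.det_permute', sign_σ6]
    simp
  rw [← h1, h2]

lemma det_aux6 (s3 c3 s4 c4 s5 c5 t4 : ℝ) (h3 : s3^2+c3^2=1) (h4 : s4^2+c4^2=1)
    (h5 : s5^2+c5^2=1) (hc4 : c4 ≠ 0) :
    (!![c4*c5, 0, 0, 0, s4*c5*c3+s5*s3, -(s4*c5*s3)+s5*c3;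
        c4*s5, 0, 0, 0, s4*s5*c3-c5*s3, -(s4*s5*s3)-c5*c3;
        -s4,   0, 0, 0, c4*c3,          -(c4*s3);
        0, 1, s3*t4, c3*t4, 0, 0;
        0, 0, c3, -s3, 0, 0;
        0, 0, s3/c4, c3/c4, 0, 0] : Matrix (Fin 6) (Fin 6) ℝ).det = 1/c4 := by
  rw [det_blocks6]
  have hAdet : (!![c4*c5, s4*c5*c3+s5*s3, -(s4*c5*s3)+s5*c3;
       c4*s5, s4*s5*c3-c5*s3, -(s4*s5*s3)-c5*c3;
       -s4,   c4*c3,          -(c4*s3)] : Matrix (Fin 3) (Fin 3) ℝ).det = 1 := by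
    rw [Matrix.det_fin_three]
    norm_num [Matrix.vecHead, Matrix.vecTail, Matrix.cons_val_two]
    linear_combination ((c5^2+s5^2)*(s4^2+c4^2))*h3 + (s4^2+c4^2)*h5 + h4
  have hDdet : (!![(1:ℝ), s3*t4, c3*t4; 0, c3, -s3; 0, s3/c4, c3/c4] :
      Matrix (Fin 3) (Fin 3) ℝ).det = 1/c4 := by
    rw [Matrix.det_fin_three]
    norm_num [Matrix.vecHead, Matrix.vecTail, Matrix.cons_val_two]
    field_simp
    linear_combination h3
  rw [hAdet, hDdet, one_mul]

theorem stmt_7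
    (f₁ f₂ f₃ f₄ : (Fin 6 → ℝ) → (Fin 6 → ℝ))
    (hf₁ : ∀ x, f₁ x = ![Real.cos (x 4) * Real.cos (x 5),
      Real.cos (x 4) * Real.sin (x 5), -Real.sin (x 4), 0, 0, 0])
    (hf₂ : ∀ x, f₂ x = ![0, 0, 0, 1, 0, 0])
    (hf₃ : ∀ x, f₃ x = ![0, 0, 0, Real.sin (x 3) * Real.tan (x 4),
      Real.cos (x 3), Real.sin (x 3) / Real.cos (x 4)])
    (hf₄ : ∀ x, f₄ x = ![0, 0, 0, Real.cos (x 3) * Real.tan (x 4),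
      -Real.sin (x 3), Real.cos (x 3) / Real.cos (x 4)])
    (bracket : ((Fin 6 → ℝ) → (Fin 6 → ℝ)) → ((Fin 6 → ℝ) → (Fin 6 → ℝ)) →
      ((Fin 6 → ℝ) → (Fin 6 → ℝ)))
    (hbracket : ∀ f g x, bracket f g x = fderiv ℝ g x (f x) - fderiv ℝ f x (g x)) :
    ∀ x : Fin 6 → ℝ, -(Real.pi / 2) < x 4 → x 4 < Real.pi / 2 →
      (Matrix.of fun i j : Fin 6 =>
        ![f₁ x, f₂ x, f₃ x, f₄ x, bracket f₁ f₃ x, bracket f₁ f₄ x] j i).det ≠ 0 := by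
  intro x h1 h2
  have hc4 : 0 < Real.cos (x 4) := Real.cos_pos_of_mem_Ioo ⟨h1, h2⟩
  have hc4' : Real.cos (x 4) ≠ 0 := ne_of_gt hc4
  -- derivative of f₁
  have H1 : HasFDerivAt f₁ (ContinuousLinearMap.pi
      ![Real.cos (x 4) • ((-Real.sin (x 5)) • pr6 5) + Real.cos (x 5) • ((-Real.sin (x 4)) • pr6 4),
        Real.cos (x 4) • (Real.cos (x 5) • pr6 5) + Real.sin (x 5) • ((-Real.sin (x 4)) • pr6 4),
        -(Real.cos (x 4) • pr6 4), 0, 0, 0]) x := by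
    rw [hasFDerivAt_pi']
    intro i
    simp only [hf₁]
    fin_cases i <;>
      simp only [Matrix.cons_val_zero, Matrix.cons_val_one, Matrix.head_cons, proj_pi,
        Matrix.cons_val_two, Matrix.tail_cons, Matrix.cons_val_three, Matrix.cons_val_four,
        Fin.isValue, Matrix.cons_val_fin_one]
    · exact (comp_proj6 4 x (Real.hasDerivAt_cos _)).mul (comp_proj6 5 x (Real.hasDerivAt_cos _))
    · exact (comp_proj6 4 x (Real.hasDerivAt_cos _)).mul (comp_proj6 5 x (Real.hasDerivAt_sin _))
    · exact (comp_proj6 4 x (Real.hasDerivAt_sin _)).neg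
    · exact hasFDerivAt_const 0 x
    · exact hasFDerivAt_const 0 x
    · exact hasFDerivAt_const 0 x
  -- derivative of f₃
  have H3 : HasFDerivAt f₃ (ContinuousLinearMap.pi
      ![0, 0, 0,
        Real.sin (x 3) • ((1 / Real.cos (x 4) ^ 2) • pr6 4) +
          Real.tan (x 4) • (Real.cos (x 3) • pr6 3),
        (-Real.sin (x 3)) • pr6 3,
        Real.sin (x 3) • ((-(-Real.sin (x 4)) / Real.cos (x 4) ^ 2) • pr6 4) +
          (Real.cos (x 4))⁻¹ • (Real.cos (x 3) • pr6 3)]) x := by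
    rw [hasFDerivAt_pi']
    intro i
    simp only [hf₃, div_eq_mul_inv]
    fin_cases i <;>
      simp only [Matrix.cons_val_zero, Matrix.cons_val_one, Matrix.head_cons, proj_pi,
        Matrix.cons_val_two, Matrix.tail_cons, Matrix.cons_val_three, Matrix.cons_val_four,
        Fin.isValue, Matrix.cons_val_fin_one]
    · exact hasFDerivAt_const 0 x
    · exact hasFDerivAt_const 0 x
    · exact hasFDerivAt_const 0 x
    · exact (comp_proj6 3 x (Real.hasDerivAt_sin _)).mul
        (comp_proj6 4 x (Real.hasDerivAt_tan hc4'))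
    · exact comp_proj6 3 x (Real.hasDerivAt_cos _)
    · exact (comp_proj6 3 x (Real.hasDerivAt_sin _)).mul
        (comp_proj6 4 x ((Real.hasDerivAt_cos _).inv hc4'))
  -- derivative of f₄
  have H4 : HasFDerivAt f₄ (ContinuousLinearMap.pi
      ![0, 0, 0,
        Real.cos (x 3) • ((1 / Real.cos (x 4) ^ 2) • pr6 4) +
          Real.tan (x 4) • ((-Real.sin (x 3)) • pr6 3),
        -(Real.cos (x 3) • pr6 3),
        Real.cos (x 3) • ((-(-Real.sin (x 4)) / Real.cos (x 4) ^ 2) • pr6 4) +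
          (Real.cos (x 4))⁻¹ • ((-Real.sin (x 3)) • pr6 3)]) x := by
    rw [hasFDerivAt_pi']
    intro i
    simp only [hf₄, div_eq_mul_inv]
    fin_cases i <;>
      simp only [Matrix.cons_val_zero, Matrix.cons_val_one, Matrix.head_cons, proj_pi,
        Matrix.cons_val_two, Matrix.tail_cons, Matrix.cons_val_three, Matrix.cons_val_four,
        Fin.isValue, Matrix.cons_val_fin_one]
    · exact hasFDerivAt_const 0 x
    · exact hasFDerivAt_const 0 x
    · exact hasFDerivAt_const 0 x
    · exact (comp_proj6 3 x (Real.hasDerivAt_cos _)).mul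
        (comp_proj6 4 x (Real.hasDerivAt_tan hc4'))
    · exact (comp_proj6 3 x (Real.hasDerivAt_sin _)).neg
    · exact (comp_proj6 3 x (Real.hasDerivAt_cos _)).mul
        (comp_proj6 4 x ((Real.hasDerivAt_cos _).inv hc4'))
  have hD1 : ∀ v : Fin 6 → ℝ, fderiv ℝ f₁ x v =
      ![-Real.sin (x 4) * Real.cos (x 5) * v 4 - Real.cos (x 4) * Real.sin (x 5) * v 5,
        -Real.sin (x 4) * Real.sin (x 5) * v 4 + Real.cos (x 4) * Real.cos (x 5) * v 5,
        -Real.cos (x 4) * v 4, 0, 0, 0] := by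
    intro v
    rw [H1.fderiv]
    funext j
    fin_cases j <;> norm_num [Matrix.cons_val_succ, ContinuousLinearMap.pi_apply] <;> ring
  have hD3 : fderiv ℝ f₃ x (f₁ x) = 0 := by
    rw [H3.fderiv]
    funext j
    have h3 : f₁ x 3 = 0 := by rw [hf₁]; rfl
    have h4 : f₁ x 4 = 0 := by rw [hf₁]; rfl
    fin_cases j <;> norm_num [Matrix.cons_val_succ, ContinuousLinearMap.pi_apply, h3, h4]
  have hD4 : fderiv ℝ f₄ x (f₁ x) = 0 := by
    rw [H4.fderiv]
    funext j
    have h3 : f₁ x 3 = 0 := by rw [hf₁]; rfl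
    have h4 : f₁ x 4 = 0 := by rw [hf₁]; rfl
    fin_cases j <;> norm_num [Matrix.cons_val_succ, ContinuousLinearMap.pi_apply, h3, h4]
  have hb13 : bracket f₁ f₃ x =
      ![Real.sin (x 4) * Real.cos (x 5) * Real.cos (x 3) + Real.sin (x 5) * Real.sin (x 3),
        Real.sin (x 4) * Real.sin (x 5) * Real.cos (x 3) - Real.cos (x 5) * Real.sin (x 3),
        Real.cos (x 4) * Real.cos (x 3), 0, 0, 0] := by
    rw [hbracket, hD3, hD1]
    funext j
    have h4 : f₃ x 4 = Real.cos (x 3) := by rw [hf₃]; rfl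
    have h5 : f₃ x 5 = Real.sin (x 3) / Real.cos (x 4) := by rw [hf₃]; rfl
    fin_cases j <;> norm_num [Matrix.cons_val_succ, h4, h5] <;> field_simp <;> ring
  have hb14 : bracket f₁ f₄ x =
      ![-(Real.sin (x 4) * Real.cos (x 5) * Real.sin (x 3)) + Real.sin (x 5) * Real.cos (x 3),
        -(Real.sin (x 4) * Real.sin (x 5) * Real.sin (x 3)) - Real.cos (x 5) * Real.cos (x 3),
        -(Real.cos (x 4) * Real.sin (x 3)), 0, 0, 0] := by
    rw [hbracket, hD4, hD1]
    funext j
    have h4 : f₄ x 4 = -Real.sin (x 3) := by rw [hf₄]; rfl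
    have h5 : f₄ x 5 = Real.cos (x 3) / Real.cos (x 4) := by rw [hf₄]; rfl
    fin_cases j <;> norm_num [Matrix.cons_val_succ, h4, h5] <;> field_simp <;> ring
  have hM : (Matrix.of fun i j : Fin 6 =>
        ![f₁ x, f₂ x, f₃ x, f₄ x, bracket f₁ f₃ x, bracket f₁ f₄ x] j i) =
      !![Real.cos (x 4) * Real.cos (x 5), 0, 0, 0,
          Real.sin (x 4) * Real.cos (x 5) * Real.cos (x 3) + Real.sin (x 5) * Real.sin (x 3),
          -(Real.sin (x 4) * Real.cos (x 5) * Real.sin (x 3)) + Real.sin (x 5) * Real.cos (x 3);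
        Real.cos (x 4) * Real.sin (x 5), 0, 0, 0,
          Real.sin (x 4) * Real.sin (x 5) * Real.cos (x 3) - Real.cos (x 5) * Real.sin (x 3),
          -(Real.sin (x 4) * Real.sin (x 5) * Real.sin (x 3)) - Real.cos (x 5) * Real.cos (x 3);
        -Real.sin (x 4), 0, 0, 0, Real.cos (x 4) * Real.cos (x 3),
          -(Real.cos (x 4) * Real.sin (x 3));
        0, 1, Real.sin (x 3) * Real.tan (x 4), Real.cos (x 3) * Real.tan (x 4), 0, 0;
        0, 0, Real.cos (x 3), -Real.sin (x 3), 0, 0;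
        0, 0, Real.sin (x 3) / Real.cos (x 4), Real.cos (x 3) / Real.cos (x 4), 0, 0] := by
    ext i j
    fin_cases i <;> fin_cases j <;>
      norm_num [Matrix.cons_val_succ, hf₁, hf₂, hf₃, hf₄, hb13, hb14]
  rw [hM, det_aux6 _ _ _ _ _ _ _ (Real.sin_sq_add_cos_sq (x 3))
    (Real.sin_sq_add_cos_sq (x 4)) (Real.sin_sq_add_cos_sq (x 5)) hc4']
  exact one_div_ne_zero hc4'
end

section
/- Let x : [0, ∞) → R^n and let ‖x₀‖ ≤ δ₀. Suppose ‖x(jε)‖ ≤ ‖x₀‖ e^{−λ₂ jε} for all integers j ≥ 0 and ‖x(t) − x(jε)‖ ≤ c_x ε^{1/3} ‖x(jε)‖^{1/3} for t ∈ [jε, (j+1)ε]. Then for all t ≥ 0, ‖x(t)‖ ≤ μ₁ ‖x₀‖^{1/3} e^{−(λ₂/3) t}, where μ₁ = e^{λ₂ ε}(c_x ε^{1/3} + δ₀^{2/3}). -/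
theorem stmt_11 {n : ℕ} (ε lam₂ cx δ₀ : ℝ) (hε : 0 < ε) (hlam₂ : 0 < lam₂)
    (hcx : 0 < cx) (hδ₀ : 0 < δ₀)
    (x : ℝ → EuclideanSpace ℝ (Fin n)) (hx0 : ‖x 0‖ ≤ δ₀)
    (hdecay : ∀ j : ℕ, ‖x (j * ε)‖ ≤ ‖x 0‖ * Real.exp (-lam₂ * j * ε))
    (hdev : ∀ j : ℕ, ∀ t ∈ Set.Icc ((j : ℝ) * ε) ((j + 1 : ℕ) * ε),
      ‖x t - x (j * ε)‖ ≤ cx * ε ^ ((1 : ℝ) / 3) * ‖x (j * ε)‖ ^ ((1 : ℝ) / 3)) :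
    ∀ t : ℝ, 0 ≤ t →
      ‖x t‖ ≤ Real.exp (lam₂ * ε) * (cx * ε ^ ((1 : ℝ) / 3) + δ₀ ^ ((2 : ℝ) / 3)) *
        ‖x 0‖ ^ ((1 : ℝ) / 3) * Real.exp (-(lam₂ / 3) * t) := by
  intro t ht
  set j : ℕ := ⌊t / ε⌋₊ with hjdef
  have hdivnn : 0 ≤ t / ε := div_nonneg ht hε.le
  have hj1 : (j : ℝ) * ε ≤ t := by
    have := Nat.floor_le hdivnn
    calc (j : ℝ) * ε ≤ (t / ε) * ε := by
          exact mul_le_mul_of_nonneg_right this hε.le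
      _ = t := by field_simp
  have hj2 : t ≤ ((j : ℝ) + 1) * ε := by
    have := (Nat.lt_floor_add_one (t / ε)).le
    calc t = (t / ε) * ε := by field_simp
      _ ≤ ((j : ℝ) + 1) * ε := mul_le_mul_of_nonneg_right this hε.le
  set a : ℝ := ‖x ((j : ℝ) * ε)‖ with hadef
  have ha0 : 0 ≤ a := norm_nonneg _
  have hdec : a ≤ ‖x 0‖ * Real.exp (-lam₂ * j * ε) := hdecay j
  have hexple1 : Real.exp (-lam₂ * j * ε) ≤ 1 := by
    apply Real.exp_le_one_iff.mpr
    have : 0 ≤ lam₂ * j * ε := by positivity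
    nlinarith
  have haδ : a ≤ δ₀ := by
    calc a ≤ ‖x 0‖ * Real.exp (-lam₂ * j * ε) := hdec
      _ ≤ δ₀ * 1 := by
          apply mul_le_mul hx0 hexple1 (Real.exp_pos _).le hδ₀.le
      _ = δ₀ := mul_one δ₀
  -- triangle inequality
  have htri : ‖x t‖ ≤ a + cx * ε ^ ((1 : ℝ) / 3) * a ^ ((1 : ℝ) / 3) := by
    have hmem : t ∈ Set.Icc ((j : ℝ) * ε) ((j + 1 : ℕ) * ε) := by
      constructor
      · exact hj1
      · push_cast; exact hj2
    have := hdev j t hmem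
    calc ‖x t‖ = ‖x ((j : ℝ) * ε) + (x t - x ((j : ℝ) * ε))‖ := by
          congr 1; abel
      _ ≤ a + ‖x t - x ((j : ℝ) * ε)‖ := norm_add_le _ _
      _ ≤ a + cx * ε ^ ((1 : ℝ) / 3) * a ^ ((1 : ℝ) / 3) := by linarith
  -- a ≤ δ₀^{2/3} a^{1/3}
  have hsplit : a ≤ δ₀ ^ ((2 : ℝ) / 3) * a ^ ((1 : ℝ) / 3) := by
    rcases eq_or_lt_of_le ha0 with h0 | hpos
    · rw [← h0]
      rw [Real.zero_rpow (by norm_num : (1:ℝ)/3 ≠ 0)]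
      simp
    · have heq : a = a ^ ((2 : ℝ) / 3) * a ^ ((1 : ℝ) / 3) := by
        rw [← Real.rpow_add hpos]
        norm_num
      nth_rewrite 1 [heq]
      apply mul_le_mul_of_nonneg_right _ (Real.rpow_nonneg ha0 _)
      exact Real.rpow_le_rpow ha0 haδ (by norm_num)
  have hstep1 : ‖x t‖ ≤ (cx * ε ^ ((1 : ℝ) / 3) + δ₀ ^ ((2 : ℝ) / 3)) * a ^ ((1 : ℝ) / 3) := by
    calc ‖x t‖ ≤ a + cx * ε ^ ((1 : ℝ) / 3) * a ^ ((1 : ℝ) / 3) := htri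
      _ ≤ δ₀ ^ ((2 : ℝ) / 3) * a ^ ((1 : ℝ) / 3) + cx * ε ^ ((1 : ℝ) / 3) * a ^ ((1 : ℝ) / 3) := by
          linarith
      _ = (cx * ε ^ ((1 : ℝ) / 3) + δ₀ ^ ((2 : ℝ) / 3)) * a ^ ((1 : ℝ) / 3) := by ring
  -- bound a^{1/3}
  have hcube : a ^ ((1 : ℝ) / 3) ≤
      ‖x 0‖ ^ ((1 : ℝ) / 3) * Real.exp (-lam₂ * j * ε / 3) := by
    have h1 : a ^ ((1 : ℝ) / 3) ≤ (‖x 0‖ * Real.exp (-lam₂ * j * ε)) ^ ((1 : ℝ) / 3) :=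
      Real.rpow_le_rpow ha0 hdec (by norm_num)
    have h2 : (‖x 0‖ * Real.exp (-lam₂ * j * ε)) ^ ((1 : ℝ) / 3)
        = ‖x 0‖ ^ ((1 : ℝ) / 3) * Real.exp (-lam₂ * j * ε / 3) := by
      rw [Real.mul_rpow (norm_nonneg _) (Real.exp_pos _).le, ← Real.exp_mul]
      ring_nf
    rw [h2] at h1; exact h1
  have hexp : Real.exp (-lam₂ * j * ε / 3) ≤
      Real.exp (lam₂ * ε) * Real.exp (-(lam₂ / 3) * t) := by
    rw [← Real.exp_add]
    apply Real.exp_le_exp.mpr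
    have hjt : t - ε ≤ (j : ℝ) * ε := by nlinarith
    nlinarith
  have hbase : 0 ≤ cx * ε ^ ((1 : ℝ) / 3) + δ₀ ^ ((2 : ℝ) / 3) := by positivity
  calc ‖x t‖ ≤ (cx * ε ^ ((1 : ℝ) / 3) + δ₀ ^ ((2 : ℝ) / 3)) * a ^ ((1 : ℝ) / 3) := hstep1
    _ ≤ (cx * ε ^ ((1 : ℝ) / 3) + δ₀ ^ ((2 : ℝ) / 3)) *
        (‖x 0‖ ^ ((1 : ℝ) / 3) * Real.exp (-lam₂ * j * ε / 3)) :=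
        mul_le_mul_of_nonneg_left hcube hbase
    _ ≤ (cx * ε ^ ((1 : ℝ) / 3) + δ₀ ^ ((2 : ℝ) / 3)) *
        (‖x 0‖ ^ ((1 : ℝ) / 3) * (Real.exp (lam₂ * ε) * Real.exp (-(lam₂ / 3) * t))) := by
        apply mul_le_mul_of_nonneg_left _ hbase
        exact mul_le_mul_of_nonneg_left hexp (Real.rpow_nonneg (norm_nonneg _) _)
    _ = Real.exp (lam₂ * ε) * (cx * ε ^ ((1 : ℝ) / 3) + δ₀ ^ ((2 : ℝ) / 3)) *
        ‖x 0‖ ^ ((1 : ℝ) / 3) * Real.exp (-(lam₂ / 3) * t) := by ring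
end
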